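/- arXiv:1410.0214 — 2 statements merged into one kernel-verified Lean document; each statement's English description precedes it below -/
import Mathlib

section
/- Let X_0 be a real-valued random variable such that 0 < G(r) < ∞ for every r ≥ 0 and such that for every ε > 0, G(r+ε)/G(r) → 0 as r → ∞. Then for every ε > 0, E[(U_r(X_0))² · 1(|U_r(X_0)| ≥ ε)] = o(G(r)) as r → ∞. -/
open MeasureTheory ProbabilityTheory Filter Asymptotics
open scoped ENNReal Topology NNReal

noncomputable section

/-- The shrinking operator `U_r : ℝ → ℝ` (for `r ≥ 0`):
`U_r(x) = x - r` if `x > r`, `0` if `|x| ≤ r`, and `x + r` if `x < -r`. -/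
def shrink (r x : ℝ) : ℝ := if r < x then x - r else if x < -r then x + r else 0

variable {Ω : Type*}

/-- `G(r) := ∫₀^∞ t · P(|X| > t + r) dt`. -/
def Gfun [MeasurableSpace Ω] (P : Measure Ω) (X : Ω → ℝ) (r : ℝ) : ℝ≥0∞ :=
  ∫⁻ t in Set.Ioi (0 : ℝ), ENNReal.ofReal t * P {ω | t + r < |X ω|}

/-- Strict stationarity of a two-sided sequence of random variables: for all `j, l ∈ ℤ`
and `m ≥ 0`, the random vectors `(X_j, …, X_{j+m})` and `(X_l, …, X_{l+m})` have the
same distribution. -/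
def StrictlyStationary [MeasurableSpace Ω] (P : Measure Ω) (X : ℤ → Ω → ℝ) : Prop :=
  ∀ (j l : ℤ) (m : ℕ),
    Measure.map (fun ω => fun i : Fin (m + 1) => X (j + i) ω) P =
    Measure.map (fun ω => fun i : Fin (m + 1) => X (l + i) ω) P

/-- The correlation coefficient of two real random variables. -/
def corr [MeasurableSpace Ω] (P : Measure Ω) (f g : Ω → ℝ) : ℝ :=
  (∫ ω, (f ω - ∫ x, f x ∂P) * (g ω - ∫ x, g x ∂P) ∂P) /
    (Real.sqrt (∫ ω, (f ω - ∫ x, f x ∂P) ^ 2 ∂P) *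
      Real.sqrt (∫ ω, (g ω - ∫ x, g x ∂P) ^ 2 ∂P))

/-- The maximal correlation coefficient `ρ(𝒜, ℬ)`: the supremum of `|Corr(f,g)|` over
square-integrable `f` measurable w.r.t. `𝒜` and `g` measurable w.r.t. `ℬ`. -/
def maxCorr [mΩ : MeasurableSpace Ω] (P : Measure Ω) (A B : MeasurableSpace Ω) : ℝ :=
  sSup { c | ∃ f g : Ω → ℝ, Measurable[A] f ∧ Measurable[B] g ∧
    MemLp f 2 P ∧ MemLp g 2 P ∧ c = |@corr Ω mΩ P f g| }

/-- The strong mixing coefficient `α(𝒜, ℬ)`. -/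
def alphaMix [MeasurableSpace Ω] (P : Measure Ω) (A B : MeasurableSpace Ω) : ℝ :=
  sSup { c | ∃ s t : Set Ω, MeasurableSet[A] s ∧ MeasurableSet[B] t ∧
    c = |(P (s ∩ t)).toReal - (P s).toReal * (P t).toReal| }

/-- The σ-field generated by the random variables `X k`, `k ∈ S`. -/
def genFrom [MeasurableSpace Ω] (X : ℤ → Ω → ℝ) (S : Set ℤ) : MeasurableSpace Ω :=
  ⨆ k ∈ S, MeasurableSpace.comap (X k) inferInstance

/-- `ρ(n) = ρ(σ(X_k, k ≤ 0), σ(X_k, k ≥ n))`. -/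
def rhoCoef [MeasurableSpace Ω] (P : Measure Ω) (X : ℤ → Ω → ℝ) (n : ℕ) : ℝ :=
  maxCorr P (genFrom X {k | k ≤ 0}) (genFrom X {k | (n : ℤ) ≤ k})

/-- `α(n) = α(σ(X_k, k ≤ 0), σ(X_k, k ≥ n))`. -/
def alphaCoef [MeasurableSpace Ω] (P : Measure Ω) (X : ℤ → Ω → ℝ) (n : ℕ) : ℝ :=
  alphaMix P (genFrom X {k | k ≤ 0}) (genFrom X {k | (n : ℤ) ≤ k})

/-- `ρ*(n)`: the supremum of `ρ(σ(X_k, k ∈ S), σ(X_k, k ∈ T))` over all pairs of nonempty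
disjoint `S, T ⊆ ℤ` with `dist(S,T) ≥ n`. -/
def rhoStarCoef [MeasurableSpace Ω] (P : Measure Ω) (X : ℤ → Ω → ℝ) (n : ℕ) : ℝ :=
  sSup { c | ∃ S T : Set ℤ, S.Nonempty ∧ T.Nonempty ∧ Disjoint S T ∧
    (∀ s ∈ S, ∀ t ∈ T, (n : ℤ) ≤ |s - t|) ∧
    c = maxCorr P (genFrom X S) (genFrom X T) }

/-- `Y_{k,r} := U_r(X_k) - E[U_r(X_0)]`. -/
def Ymix [MeasurableSpace Ω] (P : Measure Ω) (X : ℤ → Ω → ℝ) (k : ℤ) (r : ℝ) (ω : Ω) : ℝ :=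
  shrink r (X k ω) - ∫ ω', shrink r (X 0 ω') ∂P

/-! On `{|U_r X| ≥ ε}` one has `|U_r X| ≤ 2 |U_{r+ε/2} X|`, so the truncated second moment
is at most `4 E[U_{r+ε/2}(X)²]`. By the layer-cake formula `E[U_s(X)²] = 2 G(s)`, hence the
truncated moment is at most `8 G(r + ε/2) = o(G(r))`. -/

@[fun_prop]
theorem measurable_shrink (r : ℝ) : Measurable (shrink r) :=
  Measurable.ite measurableSet_Ioi (measurable_id.sub_const r) <|
    Measurable.ite measurableSet_Iio (measurable_id.add_const r) measurable_const

theorem abs_shrink {r : ℝ} (hr : 0 ≤ r) (x : ℝ) : |shrink r x| = max (|x| - r) 0 := by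
  unfold shrink
  split_ifs with h₁ h₂
  · rw [abs_of_pos (sub_pos.2 h₁), abs_of_pos (hr.trans_lt h₁), max_eq_left (by linarith)]
  · rw [abs_of_neg (by linarith), abs_of_neg (by linarith), max_eq_left (by linarith)]
    ring
  · rw [abs_zero, max_eq_right (by linarith [abs_le.2 ⟨not_lt.1 h₂, not_lt.1 h₁⟩])]

theorem lt_abs_shrink_iff {r t : ℝ} (hr : 0 ≤ r) (ht : 0 ≤ t) (x : ℝ) :
    t < |shrink r x| ↔ t + r < |x| := by
  rw [abs_shrink hr, lt_max_iff]
  constructor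
  · rintro (h | h) <;> linarith
  · intro h; left; linarith

theorem abs_shrink_le_two_mul {r δ x : ℝ} (hr : 0 ≤ r) (hδ : 0 ≤ δ)
    (hx : 2 * δ ≤ |shrink r x|) : |shrink r x| ≤ 2 * |shrink (r + δ) x| := by
  rw [abs_shrink hr] at hx ⊢
  rw [abs_shrink (add_nonneg hr hδ)]
  rcases le_or_gt (|x| - r) 0 with h | h
  · rw [max_eq_right h]
    positivity
  · rw [max_eq_left h.le] at hx ⊢
    linarith [le_max_left (|x| - (r + δ)) 0]

section Moments

variable [MeasurableSpace Ω] (P : Measure Ω) {X : Ω → ℝ}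

theorem lintegral_sq_shrink (hX : Measurable X) {s : ℝ} (hs : 0 ≤ s) :
    ∫⁻ ω, ENNReal.ofReal (shrink s (X ω) ^ 2) ∂P = 2 * Gfun P X s := by
  have hlayer := lintegral_rpow_eq_lintegral_meas_lt_mul P
    (Eventually.of_forall fun ω => abs_nonneg (shrink s (X ω)))
    ((measurable_shrink s).comp hX).abs.aemeasurable two_pos
  simp only [Real.rpow_two, sq_abs] at hlayer
  rw [hlayer, Gfun, ENNReal.ofReal_ofNat]
  refine congrArg _ (setLIntegral_congr_fun measurableSet_Ioi fun t (ht : 0 < t) => ?_)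
  simp only [lt_abs_shrink_iff hs ht.le, show (2 : ℝ) - 1 = 1 by norm_num, Real.rpow_one]
  ring

theorem lintegral_sq_shrink_le {r ε : ℝ} (hX : Measurable X) (hr : 0 ≤ r) (hε : 0 ≤ ε) :
    ∫⁻ ω in {ω | ε ≤ |shrink r (X ω)|}, ENNReal.ofReal (shrink r (X ω) ^ 2) ∂P
      ≤ 8 * Gfun P X (r + ε / 2) :=
  calc ∫⁻ ω in {ω | ε ≤ |shrink r (X ω)|}, ENNReal.ofReal (shrink r (X ω) ^ 2) ∂P
      ≤ ∫⁻ ω in {ω | ε ≤ |shrink r (X ω)|},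
          4 * ENNReal.ofReal (shrink (r + ε / 2) (X ω) ^ 2) ∂P := by
        refine setLIntegral_mono (by fun_prop) fun ω hω => ?_
        have h : |shrink r (X ω)| ≤ |2 * shrink (r + ε / 2) (X ω)| := by
          rw [abs_mul, abs_two]
          exact abs_shrink_le_two_mul hr (by linarith) (by rwa [mul_div_cancel₀ ε two_ne_zero])
        rw [← ENNReal.ofReal_ofNat 4, ← ENNReal.ofReal_mul zero_le_four]
        exact ENNReal.ofReal_le_ofReal (by linarith [sq_le_sq.2 h])
    _ ≤ ∫⁻ ω, 4 * ENNReal.ofReal (shrink (r + ε / 2) (X ω) ^ 2) ∂P :=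
        setLIntegral_le_lintegral _ _
    _ = 8 * Gfun P X (r + ε / 2) := by
        rw [lintegral_const_mul' 4 _ ENNReal.ofNat_ne_top,
          lintegral_sq_shrink P hX (by positivity), ← mul_assoc]
        norm_num

theorem setIntegral_sq_shrink_le {r ε : ℝ} (hX : Measurable X) (hr : 0 ≤ r) (hε : 0 ≤ ε)
    (hG : Gfun P X (r + ε / 2) ≠ ∞) :
    ∫ ω in {ω | ε ≤ |shrink r (X ω)|}, shrink r (X ω) ^ 2 ∂P
      ≤ 8 * (Gfun P X (r + ε / 2)).toReal := by
  rw [integral_eq_lintegral_of_nonneg_ae (Eventually.of_forall fun ω => sq_nonneg _)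
      (by fun_prop : Measurable fun ω => shrink r (X ω) ^ 2).aestronglyMeasurable,
    ← ENNReal.toReal_ofNat 8, ← ENNReal.toReal_mul]
  exact ENNReal.toReal_mono (ENNReal.mul_ne_top ENNReal.ofNat_ne_top hG)
    (lintegral_sq_shrink_le P hX hr hε)

end Moments

theorem truncated_second_moment_littleO_general
    [MeasurableSpace Ω] (P : Measure Ω)
    (X₀ : Ω → ℝ) (hmeas : Measurable X₀)
    (hG : ∀ r : ℝ, 0 ≤ r → 0 < Gfun P X₀ r ∧ Gfun P X₀ r < ∞)
    (hGratio : ∀ ε : ℝ, 0 < ε →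
      Tendsto (fun r : ℝ => (Gfun P X₀ (r + ε)).toReal / (Gfun P X₀ r).toReal)
        atTop (𝓝 0)) :
    ∀ ε : ℝ, 0 < ε →
      (fun r : ℝ =>
          ∫ ω in {ω | ε ≤ |shrink r (X₀ ω)|}, shrink r (X₀ ω) ^ 2 ∂P)
        =o[atTop] fun r : ℝ => (Gfun P X₀ r).toReal := by
  intro ε hε
  have hG_shift : (fun r => (Gfun P X₀ (r + ε / 2)).toReal) =o[atTop]
      fun r => (Gfun P X₀ r).toReal := by
    refine (isLittleO_iff_tendsto' ?_).2 (hGratio _ (half_pos hε))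
    filter_upwards [eventually_ge_atTop 0] with r hr hzero
    exact absurd hzero (ENNReal.toReal_pos (hG r hr).1.ne' (hG r hr).2.ne).ne'
  refine (IsBigO.of_bound 8 ?_).trans_isLittleO hG_shift
  filter_upwards [eventually_ge_atTop 0] with r hr
  have hmeas_set : MeasurableSet {ω | ε ≤ |shrink r (X₀ ω)|} :=
    measurableSet_le measurable_const (by fun_prop)
  rw [Real.norm_of_nonneg (setIntegral_nonneg hmeas_set fun ω _ => sq_nonneg _),
    Real.norm_of_nonneg ENNReal.toReal_nonneg]
  exact setIntegral_sq_shrink_le P hmeas hr hε.le (hG _ (by positivity)).2.ne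

/-- **Eq. (4.7).** For every `ε > 0`,
`E[(U_r(X_0))² · 1(|U_r(X_0)| ≥ ε)] = o(G(r))` as `r → ∞`. -/
theorem truncated_second_moment_littleO
    [MeasurableSpace Ω] (P : Measure Ω) [IsProbabilityMeasure P]
    (X₀ : Ω → ℝ) (hmeas : Measurable X₀)
    (hG : ∀ r : ℝ, 0 ≤ r → 0 < Gfun P X₀ r ∧ Gfun P X₀ r < ∞)
    (hGratio : ∀ ε : ℝ, 0 < ε →
      Tendsto (fun r : ℝ => (Gfun P X₀ (r + ε)).toReal / (Gfun P X₀ r).toReal)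
        atTop (𝓝 0)) :
    ∀ ε : ℝ, 0 < ε →
      (fun r : ℝ =>
          ∫ ω in {ω | ε ≤ |shrink r (X₀ ω)|}, shrink r (X₀ ω) ^ 2 ∂P)
        =o[atTop] fun r : ℝ => (Gfun P X₀ r).toReal :=
  truncated_second_moment_littleO_general P X₀ hmeas hG hGratio
end
end

section
/- Let (X_k, k ∈ ℤ) be a strictly stationary sequence of real-valued random variables such that 0 < G(r) < ∞ for every r ≥ 0. For r ≥ 0 and k ∈ ℤ, set m_r := E[U_r(X_0)] and Y_{k,r} := U_r(X_k) − m_r. Suppose C > 0 is a constant such that for all r ≥ 0 and all n ∈ ℕ, (1/C)·n·E[Y_{0,r}²] ≤ E[(∑_{k=1}^n Y_{k,r})²] ≤ C·n·E[Y_{0,r}²], and let N_0 be a positive integer with (1/C)·N_0·E[Y_{0,0}²] > 1. Then for each integer n ≥ N_0 there exists a positive number r(n) such that ‖∑_{k=1}^n Y_{k,r(n)}‖₂ = 1, where ‖·‖₂ denotes the L² norm. -/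
open MeasureTheory ProbabilityTheory Filter Asymptotics
open scoped ENNReal Topology NNReal

noncomputable section

variable {Ω : Type*}

/-!
Since `G(0) < ∞`, the layer-cake formula `E[X₀²] = 2 G(0)` puts `X₀`, and by stationarity every
`X_k`, in `L²`. The bound `|Y_{k,r}| ≤ |X_k| + E|X₀|` then makes `Φ(r) = E[(∑_{k=1}^n Y_{k,r})²]`
continuous on `[0, ∞)` by dominated convergence, and `Φ(r) → 0` as `r → ∞` because
`U_r(x) = 0` once `r ≥ |x|`. The lower variance bound gives `Φ(0) > 1` for `n ≥ N₀`, so the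
intermediate value theorem yields `r > 0` with `Φ(r) = 1`.
-/

lemma shrink_eq_sub_max_min {r : ℝ} (hr : 0 ≤ r) (x : ℝ) :
    shrink r x = x - max (-r) (min r x) := by
  unfold shrink
  split_ifs <;> simp only [max_def, min_def] <;> split_ifs <;> linarith

lemma shrink_eq_zero {r x : ℝ} (h : |x| ≤ r) : shrink r x = 0 := by
  rw [abs_le] at h
  unfold shrink
  rw [if_neg (by linarith), if_neg (by linarith)]

lemma abs_shrink_le {r : ℝ} (hr : 0 ≤ r) (x : ℝ) : |shrink r x| ≤ |x| := by
  rw [shrink_eq_sub_max_min hr]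
  simp only [max_def, min_def]
  split_ifs <;> rw [abs_le] <;> constructor <;> cases abs_cases x <;> linarith

lemma continuous_shrink {r : ℝ} (hr : 0 ≤ r) : Continuous (shrink r) := by
  simp only [funext (shrink_eq_sub_max_min hr)]
  fun_prop

lemma continuousOn_shrink_left (x : ℝ) : ContinuousOn (fun r => shrink r x) (Set.Ici 0) :=
  (show Continuous fun r : ℝ => x - max (-r) (min r x) by fun_prop).continuousOn.congr
    fun _ hr => shrink_eq_sub_max_min hr x

lemma shrink_eventuallyEq_zero (x : ℝ) : (fun r => shrink r x) =ᶠ[atTop] fun _ => 0 :=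
  (eventually_ge_atTop |x|).mono fun _ => shrink_eq_zero

section IntegralShrink

variable [MeasurableSpace Ω] {P : Measure Ω} {f : Ω → ℝ}

lemma abs_integral_shrink_le {r : ℝ} (hr : 0 ≤ r) (hf : Integrable f P) :
    |∫ ω, shrink r (f ω) ∂P| ≤ ∫ ω, |f ω| ∂P :=
  (abs_integral_le_integral_abs).trans <|
    integral_mono_of_nonneg (ae_of_all _ fun _ => abs_nonneg _) hf.abs
      (ae_of_all _ fun ω => abs_shrink_le hr (f ω))

lemma continuousOn_integral_shrink (hf : Integrable f P) :
    ContinuousOn (fun r => ∫ ω, shrink r (f ω) ∂P) (Set.Ici 0) :=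
  continuousOn_of_dominated
    (fun _ hr => (continuous_shrink hr).comp_aestronglyMeasurable hf.1)
    (fun _ hr => ae_of_all _ fun ω => abs_shrink_le hr (f ω)) hf.abs
    (ae_of_all _ fun ω => continuousOn_shrink_left (f ω))

lemma tendsto_integral_shrink_atTop (hf : Integrable f P) :
    Tendsto (fun r => ∫ ω, shrink r (f ω) ∂P) atTop (𝓝 0) := by
  have hlim := tendsto_integral_filter_of_dominated_convergence (μ := P)
    (F := fun r ω => shrink r (f ω)) (fun ω => |f ω|)
    ((eventually_ge_atTop 0).mono fun _ hr =>
      (continuous_shrink hr).comp_aestronglyMeasurable hf.1)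
    ((eventually_ge_atTop 0).mono fun _ hr => ae_of_all _ fun ω => abs_shrink_le hr (f ω))
    hf.abs
    (ae_of_all _ fun ω => tendsto_const_nhds.congr' (shrink_eventuallyEq_zero (f ω)).symm)
  simpa using hlim

end IntegralShrink

section Ymix

variable [MeasurableSpace Ω] {P : Measure Ω} {X : ℤ → Ω → ℝ}

lemma abs_Ymix_le {r : ℝ} (hr : 0 ≤ r) (hX₀ : Integrable (X 0) P) (k : ℤ) (ω : Ω) :
    |Ymix P X k r ω| ≤ |X k ω| + ∫ ω', |X 0 ω'| ∂P :=
  (abs_sub _ _).trans (add_le_add (abs_shrink_le hr _) (abs_integral_shrink_le hr hX₀))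

lemma aestronglyMeasurable_Ymix {r : ℝ} (hr : 0 ≤ r) {k : ℤ}
    (hXk : AEStronglyMeasurable (X k) P) : AEStronglyMeasurable (Ymix P X k r) P :=
  ((continuous_shrink hr).comp_aestronglyMeasurable hXk).sub aestronglyMeasurable_const

lemma continuousOn_Ymix (hX₀ : Integrable (X 0) P) (k : ℤ) (ω : Ω) :
    ContinuousOn (fun r => Ymix P X k r ω) (Set.Ici 0) :=
  (continuousOn_shrink_left _).sub (continuousOn_integral_shrink hX₀)

lemma tendsto_Ymix_atTop (hX₀ : Integrable (X 0) P) (k : ℤ) (ω : Ω) :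
    Tendsto (fun r => Ymix P X k r ω) atTop (𝓝 0) := by
  simpa [Ymix] using (tendsto_const_nhds.congr' (shrink_eventuallyEq_zero (X k ω)).symm).sub
    (tendsto_integral_shrink_atTop hX₀)

variable (s : Finset ℤ)

lemma norm_sum_Ymix_sq_le {r : ℝ} (hr : 0 ≤ r) (hX₀ : Integrable (X 0) P) (ω : Ω) :
    ‖(∑ k ∈ s, Ymix P X k r ω) ^ 2‖ ≤ (∑ k ∈ s, (|X k ω| + ∫ ω', |X 0 ω'| ∂P)) ^ 2 := by
  rw [Real.norm_eq_abs, abs_pow]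
  exact pow_le_pow_left₀ (abs_nonneg _)
    ((Finset.abs_sum_le_sum_abs _ _).trans (Finset.sum_le_sum fun k _ => abs_Ymix_le hr hX₀ k ω)) 2

variable [IsFiniteMeasure P]

lemma memLp_Ymix {p : ℝ≥0∞} {r : ℝ} (hr : 0 ≤ r) {k : ℤ} (hXk : MemLp (X k) p P) :
    MemLp (Ymix P X k r) p P :=
  (hXk.of_le ((continuous_shrink hr).comp_aestronglyMeasurable hXk.1)
    (ae_of_all _ fun ω => abs_shrink_le hr (X k ω))).sub (memLp_const _)

lemma integrable_sq_sum_abs_add_const (hX : ∀ k, MemLp (X k) 2 P) (c : ℝ) :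
    Integrable (fun ω => (∑ k ∈ s, (|X k ω| + c)) ^ 2) P :=
  (memLp_finsetSum _ fun k _ => (hX k).abs.add (memLp_const c)).integrable_sq

lemma continuousOn_integral_sum_Ymix_sq (hX : ∀ k, MemLp (X k) 2 P) :
    ContinuousOn (fun r => ∫ ω, (∑ k ∈ s, Ymix P X k r ω) ^ 2 ∂P) (Set.Ici 0) :=
  have hX₀ := (hX 0).integrable one_le_two
  continuousOn_of_dominated
    (fun _ hr => ((s.aestronglyMeasurable_fun_sum fun k _ =>
      aestronglyMeasurable_Ymix hr (hX k).1).pow 2))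
    (fun _ hr => ae_of_all _ (norm_sum_Ymix_sq_le s hr hX₀))
    (integrable_sq_sum_abs_add_const s hX _)
    (ae_of_all _ fun ω => (continuousOn_finsetSum _ fun k _ => continuousOn_Ymix hX₀ k ω).pow 2)

lemma tendsto_integral_sum_Ymix_sq_atTop (hX : ∀ k, MemLp (X k) 2 P) :
    Tendsto (fun r => ∫ ω, (∑ k ∈ s, Ymix P X k r ω) ^ 2 ∂P) atTop (𝓝 0) := by
  have hX₀ := (hX 0).integrable one_le_two
  have hlim := tendsto_integral_filter_of_dominated_convergence (μ := P)
    (F := fun r ω => (∑ k ∈ s, Ymix P X k r ω) ^ 2) _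
    ((eventually_ge_atTop 0).mono fun _ hr => (s.aestronglyMeasurable_fun_sum fun k _ =>
      aestronglyMeasurable_Ymix hr (hX k).1).pow 2)
    ((eventually_ge_atTop 0).mono fun _ hr => ae_of_all _ (norm_sum_Ymix_sq_le s hr hX₀))
    (integrable_sq_sum_abs_add_const s hX _)
    (ae_of_all _ fun ω => (tendsto_finsetSum _ fun k _ => tendsto_Ymix_atTop hX₀ k ω).pow 2)
  simpa using hlim

end Ymix

lemma StrictlyStationary.identDistrib [MeasurableSpace Ω] {P : Measure Ω} {X : ℤ → Ω → ℝ}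
    (hstat : StrictlyStationary P X) (hmeas : ∀ k, Measurable (X k)) (j l : ℤ) :
    IdentDistrib (X j) (X l) P P where
  aemeasurable_fst := (hmeas j).aemeasurable
  aemeasurable_snd := (hmeas l).aemeasurable
  map_eq := by
    have hvec : ∀ i : ℤ, Measurable fun ω => fun _ : Fin 1 => X (i + 0) ω :=
      fun i => measurable_pi_lambda _ fun _ => hmeas _
    have h := congrArg (Measure.map fun v : Fin 1 → ℝ => v 0) (hstat j l 0)
    simp only [Fin.val_eq_zero, Nat.cast_zero] at h
    rwa [Measure.map_map (measurable_pi_apply 0) (hvec j),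
      Measure.map_map (measurable_pi_apply 0) (hvec l), add_zero, add_zero] at h

lemma memLp_two_of_Gfun_zero_lt_top [MeasurableSpace Ω] {P : Measure Ω} {X : Ω → ℝ}
    (hX : Measurable X) (hG : Gfun P X 0 < ∞) : MemLp X 2 P := by
  have layercake := lintegral_rpow_eq_lintegral_meas_lt_mul P
    (ae_of_all _ fun ω => abs_nonneg (X ω)) hX.abs.aemeasurable two_pos
  have hG' : ∫⁻ t in Set.Ioi 0, P {ω | t < |X ω|} * ENNReal.ofReal (t ^ ((2 : ℝ) - 1)) =
      Gfun P X 0 := by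
    norm_num [Gfun, mul_comm]
  rw [memLp_two_iff_integrable_sq hX.aestronglyMeasurable]
  refine ⟨by fun_prop, ?_⟩
  rw [hasFiniteIntegral_iff_ofReal (ae_of_all _ fun ω => sq_nonneg (X ω))]
  have hsq : ∀ ω, ENNReal.ofReal (X ω ^ 2) = ENNReal.ofReal (|X ω| ^ (2 : ℝ)) := fun ω => by
    rw [Real.rpow_two, sq_abs]
  rw [lintegral_congr hsq, layercake, hG']
  exact ENNReal.mul_lt_top ENNReal.ofReal_lt_top hG

lemma eLpNorm_two_eq_one_of_integral_sq [MeasurableSpace Ω] {P : Measure Ω} {f : Ω → ℝ}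
    (hf : MemLp f 2 P) (h : ∫ ω, f ω ^ 2 ∂P = 1) : eLpNorm f 2 P = 1 := by
  rw [hf.eLpNorm_eq_integral_rpow_norm two_ne_zero ENNReal.ofNat_ne_top]
  simp [h]

theorem exists_shrinking_parameter_norm_one_general
    [MeasurableSpace Ω] (P : Measure Ω) [IsProbabilityMeasure P]
    (X : ℤ → Ω → ℝ) (hmeas : ∀ k, Measurable (X k)) (hstat : StrictlyStationary P X)
    (hG : ∀ r : ℝ, 0 ≤ r → 0 < Gfun P (X 0) r ∧ Gfun P (X 0) r < ∞)
    (C : ℝ)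
    (hbound : ∀ r : ℝ, 0 ≤ r → ∀ n : ℕ, 0 < n →
      (1 / C) * n * ∫ ω, Ymix P X 0 r ω ^ 2 ∂P ≤
          ∫ ω, (∑ k ∈ Finset.Icc (1 : ℤ) (n : ℤ), Ymix P X k r ω) ^ 2 ∂P ∧
        ∫ ω, (∑ k ∈ Finset.Icc (1 : ℤ) (n : ℤ), Ymix P X k r ω) ^ 2 ∂P ≤
          C * n * ∫ ω, Ymix P X 0 r ω ^ 2 ∂P)
    (N₀ : ℕ)
    (hN₀ : 1 < (1 / C) * N₀ * ∫ ω, Ymix P X 0 0 ω ^ 2 ∂P) :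
    ∀ n : ℕ, N₀ ≤ n → ∃ r : ℝ, 0 < r ∧
      eLpNorm (fun ω => ∑ k ∈ Finset.Icc (1 : ℤ) (n : ℤ), Ymix P X k r ω) 2 P = 1 := by
  intro n hn
  have hX : ∀ k, MemLp (X k) 2 P := fun k => (hstat.identDistrib hmeas k 0).memLp_iff.2 <|
    memLp_two_of_Gfun_zero_lt_top (hmeas 0) (hG 0 le_rfl).2
  set S := Finset.Icc (1 : ℤ) (n : ℤ)
  set Φ := fun r => ∫ ω, (∑ k ∈ S, Ymix P X k r ω) ^ 2 ∂P
  have hlower : 1 < (1 / C) * n * ∫ ω, Ymix P X 0 0 ω ^ 2 ∂P := by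
    set a := 1 / C * ∫ ω, Ymix P X 0 0 ω ^ 2 ∂P
    have hN₀a : 1 < a * N₀ := hN₀.trans_eq (mul_right_comm _ _ _)
    have ha : 0 ≤ a := (pos_of_mul_pos_left (zero_lt_one.trans hN₀a) N₀.cast_nonneg).le
    calc 1 < a * N₀ := hN₀a
      _ ≤ a * n := mul_le_mul_of_nonneg_left (by exact_mod_cast hn) ha
      _ = _ := mul_right_comm _ _ _
  have hn0 : 0 < n := Nat.pos_of_ne_zero <| by rintro rfl; norm_num at hlower
  have hΦ0 : 1 < Φ 0 := hlower.trans_le (hbound 0 le_rfl n hn0).1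
  obtain ⟨R, hR, hR0⟩ := (((tendsto_integral_sum_Ymix_sq_atTop S hX).eventually
    (gt_mem_nhds one_pos)).and (eventually_ge_atTop 0)).exists
  obtain ⟨r, hr, hΦr⟩ := intermediate_value_Icc' hR0
    ((continuousOn_integral_sum_Ymix_sq S hX).mono Set.Icc_subset_Ici_self) ⟨hR.le, hΦ0.le⟩
  refine ⟨r, hr.1.lt_of_ne ?_, eLpNorm_two_eq_one_of_integral_sq ?_ hΦr⟩
  · rintro rfl
    exact hΦ0.ne' hΦr
  · exact memLp_finsetSum _ fun k _ => memLp_Ymix hr.1 (hX k)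

/-- **Lemma 4.3 (first part).** For each `n ≥ N₀` there is `r(n) > 0` with
`‖∑_{k=1}^n Y_{k,r(n)}‖₂ = 1`. -/
theorem exists_shrinking_parameter_norm_one
    [MeasurableSpace Ω] (P : Measure Ω) [IsProbabilityMeasure P]
    (X : ℤ → Ω → ℝ) (hmeas : ∀ k, Measurable (X k)) (hstat : StrictlyStationary P X)
    (hG : ∀ r : ℝ, 0 ≤ r → 0 < Gfun P (X 0) r ∧ Gfun P (X 0) r < ∞)
    (C : ℝ) (hC : 0 < C)
    (hbound : ∀ r : ℝ, 0 ≤ r → ∀ n : ℕ, 0 < n →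
      (1 / C) * n * ∫ ω, Ymix P X 0 r ω ^ 2 ∂P ≤
          ∫ ω, (∑ k ∈ Finset.Icc (1 : ℤ) (n : ℤ), Ymix P X k r ω) ^ 2 ∂P ∧
        ∫ ω, (∑ k ∈ Finset.Icc (1 : ℤ) (n : ℤ), Ymix P X k r ω) ^ 2 ∂P ≤
          C * n * ∫ ω, Ymix P X 0 r ω ^ 2 ∂P)
    (N₀ : ℕ) (hN₀pos : 0 < N₀)
    (hN₀ : 1 < (1 / C) * N₀ * ∫ ω, Ymix P X 0 0 ω ^ 2 ∂P) :
    ∀ n : ℕ, N₀ ≤ n → ∃ r : ℝ, 0 < r ∧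
      eLpNorm (fun ω => ∑ k ∈ Finset.Icc (1 : ℤ) (n : ℤ), Ymix P X k r ω) 2 P = 1 :=
  exists_shrinking_parameter_norm_one_general P X hmeas hstat hG C hbound N₀ hN₀
end
end
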